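/- Let V be a partial order viewed as a category, ♭ : V → V monotone with ♭(v) ≤ v and ♭(♭(v)) = ♭(v), and J the quantization Grothendieck topology on V. Let R : V^op ⥤ Type be a J-sheaf and S a subpresheaf of R. Then S (regarded as a presheaf, with restriction maps induced from R) is a J-sheaf if and only if S is closed, i.e. S̄ = S, where S̄ is the ♭-closure of S in R: S̄(v) = { q ∈ R(v) | R(♭(v) ⟶ v)(q) ∈ S(♭(v)) }. -/

import Mathlib

/-!
Every covering sieve on `v` contains `♭v ⟶ v`, and the sieve generated by that single arrow
already covers. So a presheaf `P` is a sheaf exactly when each restriction `P(v) → P(♭v)` is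
bijective: injectivity at `♭w ≤ w` gives separatedness for the pullbacks of the generated sieve,
since `♭w ≤ ♭v` whenever `w ≤ v`. For a subpresheaf `S` of a sheaf `R`, the restriction map of `S`
at `v` is the bijection `R(v) → R(♭v)` cut down to `S(v) → S(♭v)`, which is again bijective iff
`S(v)` is the full preimage of `S(♭v)`, i.e. iff `S` is closed.
-/

open CategoryTheory

/-- The quantization Grothendieck topology on a partial order `V` induced by a
monotone idempotent deflation `♭ : V → V`: a sieve on `v` covers iff it contains
the morphism `♭(v) ⟶ v`. -/
def quantTopology {V : Type*} [PartialOrder V] {b : V → V} (hb : Monotone b)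
    (hle : ∀ v, b v ≤ v) (hidem : ∀ v, b (b v) = b v) :
    GrothendieckTopology V where
  sieves v := { S | S.arrows (homOfLE (hle v)) }
  top_mem' v := trivial
  pullback_stable' := by
    intro v v' S f hS
    exact S.downward_closed hS (homOfLE (hb (leOfHom f)))
  transitive' := by
    intro v S hS R hR
    have key : ∀ {x y : V} (_ : x = y) (hx : x ≤ v) (hy : y ≤ v),
        R.arrows (homOfLE hx) → R.arrows (homOfLE hy) := by
      rintro x y rfl hx hy h
      exact h
    exact key (hidem v) ((hle (b v)).trans (hle v)) (hle v) (hR hS)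

namespace CategoryTheory.Presieve

variable {C : Type*} [Category C] (P : Cᵒᵖ ⥤ Type*) {X Y : C}

lemma isSheafFor_singleton_iff_bijective_of_mono (f : X ⟶ Y) [Mono f] :
    IsSheafFor P (.singleton f) ↔ Function.Bijective (P.map f.op) := by
  rw [isSheafFor_singleton, Function.bijective_iff_existsUnique]
  refine forall_congr' fun _ => ⟨fun h => h fun p₁ p₂ hp => ?_, fun h _ => h⟩
  rw [cancel_mono f |>.1 hp]

lemma isSeparatedFor_of_injective_map {S : Presieve Y} {f : X ⟶ Y} (hf : S f)
    (hinj : Function.Injective (P.map f.op)) : IsSeparatedFor P S :=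
  fun _ _ _ h₁ h₂ => hinj ((h₁ f hf).trans (h₂ f hf).symm)

end CategoryTheory.Presieve

lemma Set.MapsTo.restrict_bijective_iff_preimage_eq {α β : Type*} {f : α → β} {s : Set α}
    {t : Set β} (hf : f.Bijective) (h : Set.MapsTo f s t) :
    (h.restrict f s t).Bijective ↔ f ⁻¹' t = s := by
  refine ⟨fun hr => ?_, ?_⟩
  · have hbij : Set.BijOn f s t :=
      ⟨h, h.restrict_inj.1 hr.1, h.restrict_surjective_iff.1 hr.2⟩
    rw [← hbij.image_eq, Set.preimage_image_eq _ hf.1]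
  · rintro rfl
    exact hf.bijOn_preimage.bijective

section Quantization

variable {V : Type*} [PartialOrder V] {b : V → V} (hb : Monotone b)
  (hle : ∀ v, b v ≤ v) (hidem : ∀ v, b (b v) = b v)

lemma mem_quantTopology_iff {v : V} (S : Sieve v) :
    S ∈ quantTopology hb hle hidem v ↔ S.arrows (homOfLE (hle v)) :=
  Iff.rfl

lemma isSheaf_quantTopology_iff_bijective (P : Vᵒᵖ ⥤ Type*) :
    Presieve.IsSheaf (quantTopology hb hle hidem) P ↔
      ∀ v : V, Function.Bijective (P.map (homOfLE (hle v)).op) := by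
  have hgen : ∀ v, Presieve.IsSheafFor P (Sieve.generate (.singleton (homOfLE (hle v)))).arrows ↔
      Function.Bijective (P.map (homOfLE (hle v)).op) := fun v =>
    (Presieve.isSheafFor_iff_generate _).symm.trans
      (Presieve.isSheafFor_singleton_iff_bijective_of_mono P _)
  constructor
  · intro hP v
    exact (hgen v).1 <| hP _ <| (mem_quantTopology_iff hb hle hidem _).2 <|
      Sieve.le_generate _ _ _ (Presieve.singleton_self _)
  · intro hbij v T hT
    refine Presieve.isSheafFor_subsieve_aux P ?_ ((hgen v).2 (hbij v))
      fun w g _ => Presieve.isSeparatedFor_of_injective_map P ?_ (hbij w).1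
    · rintro _ _ ⟨_, g, _, ⟨⟩, rfl⟩
      exact T.downward_closed ((mem_quantTopology_iff hb hle hidem _).1 hT) g
    · exact ⟨_, homOfLE (hb (leOfHom g)), homOfLE (hle v), Presieve.singleton_self _, rfl⟩

end Quantization

open Opposite in
/-- Let `R` be a sheaf for the quantization Grothendieck topology
and `S` a subpresheaf of `R`. Then `S` (regarded as a presheaf) is a sheaf iff `S`
is closed for the `♭`-closure in `R`: for all `v`,
`{ q ∈ R(v) | R(♭(v) ⟶ v)(q) ∈ S(♭(v)) } = S(v)`. -/
theorem subpresheaf_isSheaf_iff_closed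
    {V : Type*} [PartialOrder V] {b : V → V} (hb : Monotone b)
    (hle : ∀ v, b v ≤ v) (hidem : ∀ v, b (b v) = b v)
    (R : Vᵒᵖ ⥤ Type*)
    (hR : Presieve.IsSheaf (quantTopology hb hle hidem) R)
    (S : Subfunctor R) :
    Presieve.IsSheaf (quantTopology hb hle hidem) S.toFunctor ↔
      ∀ U : Vᵒᵖ,
        { q : R.obj U |
            R.map (homOfLE (hle U.unop)).op q ∈ S.obj (op (b U.unop)) } = S.obj U := by
  rw [isSheaf_quantTopology_iff_bijective hb hle hidem] at hR ⊢
  rw [op_surjective.forall]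
  exact forall_congr' fun v =>
    Set.MapsTo.restrict_bijective_iff_preimage_eq (hR v) (S.map (homOfLE (hle v)).op)
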